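/- arXiv:2501.13374 — 5 statements merged into one kernel-verified Lean document; each statement's English description precedes it below -/
import Mathlib

section
/- Let n ≥ 1. A vector v ∈ ℝ^n is simultaneously the vector of a permutation of {1,…,n} and the Loday vector M_n(t) of some full binary tree t with n+1 leaves if and only if v is the vector of a permutation of {1,…,n} that avoids the patterns 132 and 231. (Equivalently: the set of common vertices of the permutohedron Perm_n and Loday's associahedron Asso_n is exactly the set of 132- and 231-avoiding permutations.) -/
/-- Full binary trees: every internal vertex has exactly two children. -/
inductive BTree : Type
  | leaf : BTree
  | node : BTree → BTree → BTree

/-- Number of leaves of a full binary tree. -/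
def BTree.leaves : BTree → ℕ
  | .leaf => 1
  | .node l r => l.leaves + r.leaves

/-- The list of weights `a_i * b_i` of the internal vertices of `t`, in left-to-right
(infix) order: the `i`-th entry corresponds to the internal vertex between leaves `i-1` and `i`. -/
def BTree.loday : BTree → List ℕ
  | .leaf => []
  | .node l r => l.loday ++ (l.leaves * r.leaves) :: r.loday

/-- Loday's vector `M_n(t) ∈ ℝ^n` of a full binary tree `t` with `n+1` leaves. -/
def lodayVec (t : BTree) (n : ℕ) : Fin n → ℝ :=
  fun i => ((t.loday.getD i 0 : ℕ) : ℝ)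

/-- The vector `(σ(1), …, σ(n)) ∈ ℝ^n` of a permutation of `{1, …, n}`
(a permutation of `Fin n` with values shifted by one so that they lie in `{1, …, n}`). -/
def permVec {n : ℕ} (σ : Equiv.Perm (Fin n)) : Fin n → ℝ :=
  fun i => ((σ i : ℕ) + 1 : ℝ)

/-- A sequence `f` avoids the pattern `132` if there are no positions `p < q < r`
with `f p < f r < f q`. -/
def Avoids132 {n : ℕ} {α : Type*} [LinearOrder α] (f : Fin n → α) : Prop :=
  ¬ ∃ p q r : Fin n, p < q ∧ q < r ∧ f p < f r ∧ f r < f q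

/-- A sequence `f` avoids the pattern `231` if there are no positions `p < q < r`
with `f r < f p < f q`. -/
def Avoids231 {n : ℕ} {α : Type*} [LinearOrder α] (f : Fin n → α) : Prop :=
  ¬ ∃ p q r : Fin n, p < q ∧ q < r ∧ f r < f p ∧ f p < f q

/-! ### Auxiliary lemmas -/

lemma BTree.one_le_leaves : (t : BTree) → 1 ≤ t.leaves
  | .leaf => le_refl _
  | .node l _ => le_trans l.one_le_leaves (Nat.le_add_right _ _)

lemma BTree.loday_length : (t : BTree) → t.loday.length + 1 = t.leaves
  | .leaf => rfl
  | .node l r => by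
    simp only [loday, leaves, List.length_append, List.length_cons]
    have hl := l.loday_length
    have hr := r.loday_length
    omega

/-- The key "no peak" property: no entry has strictly smaller entries both
before and after it. -/
def NoPeak (L : List ℕ) : Prop :=
  ∀ p q r : ℕ, p < q → q < r → r < L.length →
    ¬(L.getD p 0 < L.getD q 0 ∧ L.getD r 0 < L.getD q 0)

lemma getD_mem (L : List ℕ) {i : ℕ} (h : i < L.length) : L.getD i 0 ∈ L := by
  rw [List.getD_eq_getElem L 0 h]; exact List.getElem_mem h

/-- If the Loday list of a tree has no duplicates and all its entries are bounded by its
length, then it has no peaks. -/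
lemma noPeak_of_loday : (t : BTree) → t.loday.Nodup →
    (∀ x ∈ t.loday, x ≤ t.loday.length) → NoPeak t.loday
  | .leaf, _, _ => by intro p q r _ _ hr; simp [BTree.loday] at hr
  | .node l r, h1, h2 => by
    have ha := l.one_le_leaves
    have hb := r.one_le_leaves
    have hla := l.loday_length
    have hlb := r.loday_length
    have hlen : (BTree.node l r).loday.length = l.leaves + r.leaves - 1 := by
      simp only [BTree.loday, List.length_append, List.length_cons]; omega
    have hmem : l.leaves * r.leaves ∈ (BTree.node l r).loday := by
      simp [BTree.loday]
    have hle : l.leaves * r.leaves ≤ l.leaves + r.leaves - 1 := by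
      rw [← hlen]; exact h2 _ hmem
    -- l.leaves = 1 or r.leaves = 1
    have hcase : l.leaves = 1 ∨ r.leaves = 1 := by
      by_contra hc
      push_neg at hc
      obtain ⟨h1', h2'⟩ := hc
      have hA : 2 ≤ l.leaves := by omega
      have hB : 2 ≤ r.leaves := by omega
      have hlt : l.leaves * r.leaves < l.leaves + r.leaves := by omega
      nlinarith
    rcases hcase with hc | hc
    · -- left child is a leaf: loday = r.leaves :: r.loday
      have hnil : l.loday = [] := by
        have := l.loday_length; rw [hc] at this
        exact List.eq_nil_of_length_eq_zero (by omega)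
      have hL : (BTree.node l r).loday = r.leaves :: r.loday := by
        simp [BTree.loday, hnil, hc]
      rw [hL] at h1 h2 ⊢
      have hb1 : r.leaves = r.loday.length + 1 := hlb.symm
      have hnd : r.loday.Nodup := (List.nodup_cons.mp h1).2
      have hnm : r.leaves ∉ r.loday := (List.nodup_cons.mp h1).1
      have hbd : ∀ x ∈ r.loday, x ≤ r.loday.length := by
        intro x hx
        have := h2 x (List.mem_cons_of_mem _ hx)
        simp only [List.length_cons] at this
        have : x ≠ r.leaves := fun h => hnm (h ▸ hx)
        omega
      have ih := noPeak_of_loday r hnd hbd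
      intro p q r' hpq hqr hr' hbad
      match p with
      | 0 =>
        have hq : q - 1 < r.loday.length := by
          simp only [List.length_cons] at hr'; omega
        have : (r.leaves :: r.loday).getD q 0 ≤ r.loday.length := by
          obtain ⟨q', rfl⟩ : ∃ q', q = q' + 1 := ⟨q - 1, by omega⟩
          rw [List.getD_cons_succ]
          exact hbd _ (getD_mem _ (by omega))
        simp only [List.getD_cons_zero] at hbad
        omega
      | p' + 1 =>
        obtain ⟨q', rfl⟩ : ∃ q', q = q' + 1 := ⟨q - 1, by omega⟩
        obtain ⟨r'', rfl⟩ : ∃ r'', r' = r'' + 1 := ⟨r' - 1, by omega⟩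
        simp only [List.getD_cons_succ] at hbad
        exact ih p' q' r'' (by omega) (by omega)
          (by simp only [List.length_cons] at hr'; omega) hbad
    · -- right child is a leaf: loday = l.loday ++ [l.leaves]
      have hnil : r.loday = [] := by
        have := r.loday_length; rw [hc] at this
        exact List.eq_nil_of_length_eq_zero (by omega)
      have hL : (BTree.node l r).loday = l.loday ++ [l.leaves] := by
        simp [BTree.loday, hnil, hc]
      rw [hL] at h1 h2 ⊢
      have ha1 : l.leaves = l.loday.length + 1 := hla.symm
      have hlenL : (l.loday ++ [l.leaves]).length = l.loday.length + 1 := by simp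
      have hnd : l.loday.Nodup := (List.nodup_append.mp h1).1
      have hnm : l.leaves ∉ l.loday := by
        have hdis := (List.nodup_append'.mp h1).2.2
        intro hmem'
        exact hdis hmem' (List.mem_singleton_self _)
      have hbd : ∀ x ∈ l.loday, x ≤ l.loday.length := by
        intro x hx
        have := h2 x (List.mem_append_left _ hx)
        rw [hlenL] at this
        have : x ≠ l.leaves := fun h => hnm (h ▸ hx)
        omega
      have ih := noPeak_of_loday l hnd hbd
      intro p q r' hpq hqr hr' hbad
      rw [hlenL] at hr'
      by_cases hrl : r' = l.loday.length
      · have hgr : (l.loday ++ [l.leaves]).getD r' 0 = l.leaves := by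
          rw [List.getD_append_right _ _ _ _ (le_of_eq hrl.symm)]
          simp [hrl]
        have hq : (l.loday ++ [l.leaves]).getD q 0 ≤ l.loday.length := by
          rw [List.getD_append _ _ _ _ (by omega)]
          exact hbd _ (getD_mem _ (by omega))
        rw [hgr] at hbad; omega
      · have hr2 : r' < l.loday.length := by omega
        rw [List.getD_append _ _ _ _ (by omega), List.getD_append _ _ _ _ (by omega),
          List.getD_append _ _ _ _ hr2] at hbad
        exact ih p q r' hpq hqr hr2 hbad

/-- For any permutation avoiding 132 and 231 there is a tree whose Loday list matches it. -/
lemma exists_tree : ∀ (n : ℕ) (σ : Equiv.Perm (Fin n)), Avoids132 ⇑σ → Avoids231 ⇑σ →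
    ∃ t : BTree, t.leaves = n + 1 ∧ ∀ i : Fin n, t.loday.getD i 0 = (σ i : ℕ) + 1 := by
  intro n
  induction n with
  | zero => exact fun σ _ _ => ⟨.leaf, rfl, fun i => i.elim0⟩
  | succ n ih =>
    intro σ hA hB
    set m : Fin (n + 1) := σ.symm (Fin.last n) with hm
    have hσm : σ m = Fin.last n := σ.apply_symm_apply _
    have hmax : ∀ i : Fin (n+1), i ≠ m → σ i < Fin.last n := by
      intro i hi
      have : σ i ≠ Fin.last n := fun h => hi (by
        have := σ.symm_apply_apply i; rw [h] at this; rw [hm, this])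
      exact lt_of_le_of_ne (Fin.le_last _) this
    have hcase : m = 0 ∨ m = Fin.last n := by
      by_contra hc
      push_neg at hc
      obtain ⟨h0, hl⟩ := hc
      have hm0 : (0 : Fin (n+1)) < m := by
        rcases Fin.pos_iff_ne_zero.mpr h0 with h; exact h
      have hml : m < Fin.last n := lt_of_le_of_ne (Fin.le_last _) hl
      have hp : σ 0 < σ m := by rw [hσm]; exact hmax 0 (fun h => h0 h.symm)
      have hr : σ (Fin.last n) < σ m := by rw [hσm]; exact hmax _ (fun h => hl h.symm)
      rcases lt_or_gt_of_ne (fun h : σ 0 = σ (Fin.last n) =>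
          (by simp [σ.injective h] at h0 hl; exact absurd (σ.injective h) (by
            intro hh; rw [hh] at hm0; exact absurd hml (not_lt_of_gt hm0)))) with h | h
      · exact hA ⟨0, m, Fin.last n, hm0, hml, h, hr⟩
      · exact hB ⟨0, m, Fin.last n, hm0, hml, h, hp⟩
    rcases hcase with hc | hc
    · -- maximum at position 0 : tree is node leaf t'
      have hval : ∀ i : Fin n, ((σ i.succ : Fin (n+1)) : ℕ) < n := by
        intro i
        have : σ i.succ < Fin.last n := hmax _ (by
          rw [hc]; exact fun h => Fin.succ_ne_zero i h)
        simpa [Fin.lt_def] using this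
      let f : Fin n → Fin n := fun i => ⟨(σ i.succ : ℕ), hval i⟩
      have hinj : Function.Injective f := by
        intro a b hab
        have h2 := congrArg Fin.val hab
        simp only [f] at h2
        exact Fin.succ_injective _ (σ.injective (Fin.ext h2))
      let σ' : Equiv.Perm (Fin n) := Equiv.ofBijective f (Finite.injective_iff_bijective.mp hinj)
      have hσ' : ∀ i, (σ' i : ℕ) = (σ i.succ : ℕ) := fun i => rfl
      have hA' : Avoids132 ⇑σ' := by
        rintro ⟨p, q, r, h1, h2, h3, h4⟩
        refine hA ⟨p.succ, q.succ, r.succ, by simpa using h1, by simpa using h2, ?_, ?_⟩ <;>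
          simp only [Fin.lt_def, ← hσ' _] <;> [exact h3; exact h4]
      have hB' : Avoids231 ⇑σ' := by
        rintro ⟨p, q, r, h1, h2, h3, h4⟩
        refine hB ⟨p.succ, q.succ, r.succ, by simpa using h1, by simpa using h2, ?_, ?_⟩ <;>
          simp only [Fin.lt_def, ← hσ' _] <;> [exact h3; exact h4]
      obtain ⟨t', ht', hv'⟩ := ih σ' hA' hB'
      refine ⟨.node .leaf t', by simp [BTree.leaves, ht']; omega, ?_⟩
      intro i
      have hlod : (BTree.node .leaf t').loday = (n+1) :: t'.loday := by
        simp [BTree.loday, BTree.leaves, ht']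
      rw [hlod]
      rcases Fin.eq_zero_or_eq_succ i with rfl | ⟨j, rfl⟩
      · have : σ 0 = Fin.last n := by rw [← hc, hσm]
        simp [this]
      · have : ((j.succ : Fin (n+1)) : ℕ) = (j : ℕ) + 1 := rfl
        rw [this, List.getD_cons_succ, hv' j, hσ' j]
    · -- maximum at the last position : tree is node t' leaf
      have hval : ∀ i : Fin n, ((σ i.castSucc : Fin (n+1)) : ℕ) < n := by
        intro i
        have : σ i.castSucc < Fin.last n := hmax _ (by
          rw [hc]; exact fun h => absurd h (Fin.castSucc_lt_last i).ne)
        simpa [Fin.lt_def] using this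
      let f : Fin n → Fin n := fun i => ⟨(σ i.castSucc : ℕ), hval i⟩
      have hinj : Function.Injective f := by
        intro a b hab
        have h2 := congrArg Fin.val hab
        simp only [f] at h2
        exact Fin.castSucc_injective _ (σ.injective (Fin.ext h2))
      let σ' : Equiv.Perm (Fin n) := Equiv.ofBijective f (Finite.injective_iff_bijective.mp hinj)
      have hσ' : ∀ i, (σ' i : ℕ) = (σ i.castSucc : ℕ) := fun i => rfl
      have hA' : Avoids132 ⇑σ' := by
        rintro ⟨p, q, r, h1, h2, h3, h4⟩
        refine hA ⟨p.castSucc, q.castSucc, r.castSucc, by simpa using h1, by simpa using h2,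
          ?_, ?_⟩ <;> simp only [Fin.lt_def, ← hσ' _] <;> [exact h3; exact h4]
      have hB' : Avoids231 ⇑σ' := by
        rintro ⟨p, q, r, h1, h2, h3, h4⟩
        refine hB ⟨p.castSucc, q.castSucc, r.castSucc, by simpa using h1, by simpa using h2,
          ?_, ?_⟩ <;> simp only [Fin.lt_def, ← hσ' _] <;> [exact h3; exact h4]
      obtain ⟨t', ht', hv'⟩ := ih σ' hA' hB'
      refine ⟨.node t' .leaf, by simp [BTree.leaves, ht'], ?_⟩
      intro i
      have hlod : (BTree.node t' .leaf).loday = t'.loday ++ [n+1] := by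
        simp [BTree.loday, BTree.leaves, ht']
      have htl : t'.loday.length = n := by have := t'.loday_length; omega
      rw [hlod]
      rcases Fin.eq_castSucc_or_eq_last i with ⟨j, rfl⟩ | rfl
      · rw [Fin.coe_castSucc, List.getD_append _ _ _ _ (by rw [htl]; exact j.isLt), hv' j, hσ' j]
      · have hσl : σ (Fin.last n) = Fin.last n := hc ▸ hσm
        rw [List.getD_append_right _ _ _ _ (by simp [htl, Fin.last]), hσl]
        simp [htl, Fin.last]

/-- For `n ≥ 1`, a vector `v ∈ ℝ^n` is simultaneously the vector of a
permutation of `{1, …, n}` and the Loday vector of some full binary tree with `n+1` leaves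
iff `v` is the vector of a permutation of `{1, …, n}` avoiding the patterns 132 and 231. -/
theorem perm_loday_iff_avoids (n : ℕ) (hn : 1 ≤ n) (v : Fin n → ℝ) :
    ((∃ σ : Equiv.Perm (Fin n), v = permVec σ) ∧
      (∃ t : BTree, t.leaves = n + 1 ∧ v = lodayVec t n)) ↔
    (∃ σ : Equiv.Perm (Fin n), Avoids132 ⇑σ ∧ Avoids231 ⇑σ ∧ v = permVec σ) := by
  constructor
  · rintro ⟨⟨σ, rfl⟩, t, hl, he⟩
    have hlen : t.loday.length = n := by have := t.loday_length; omega
    have key : ∀ i : ℕ, (hi : i < n) → t.loday.getD i 0 = (σ ⟨i, hi⟩ : ℕ) + 1 := by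
      intro i hi
      have h := congrFun he ⟨i, hi⟩
      simp only [permVec, lodayVec] at h
      exact_mod_cast h.symm
    have hnd : t.loday.Nodup := by
      rw [List.nodup_iff_injective_get]
      rintro ⟨a, ha⟩ ⟨b, hb⟩ h
      have ha' : a < n := hlen ▸ ha
      have hb' : b < n := hlen ▸ hb
      have hga : t.loday.get ⟨a, ha⟩ = t.loday.getD a 0 := by
        rw [List.getD_eq_getElem t.loday 0 ha]; rfl
      have hgb : t.loday.get ⟨b, hb⟩ = t.loday.getD b 0 := by
        rw [List.getD_eq_getElem t.loday 0 hb]; rfl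
      rw [hga, hgb, key a ha', key b hb'] at h
      have : σ ⟨a, ha'⟩ = σ ⟨b, hb'⟩ := Fin.ext (by omega)
      have h6 := congrArg Fin.val (σ.injective this)
      exact Fin.ext h6
    have hbd : ∀ x ∈ t.loday, x ≤ t.loday.length := by
      intro x hx
      obtain ⟨⟨i, hi⟩, hg⟩ := List.mem_iff_get.mp hx
      have hi' : i < n := hlen ▸ hi
      have : t.loday.get ⟨i, hi⟩ = t.loday.getD i 0 := by
        rw [List.getD_eq_getElem t.loday 0 hi]; rfl
      rw [this, key i hi'] at hg
      have := (σ ⟨i, hi'⟩).isLt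
      omega
    have hNP := noPeak_of_loday t hnd hbd
    have keyF : ∀ i : Fin n, t.loday.getD i 0 = (σ i : ℕ) + 1 := by
      intro i
      rw [key i.val i.isLt, Fin.eta]
    have hA : Avoids132 ⇑σ := by
      rintro ⟨p, q, r, h1, h2, h3, h4⟩
      refine hNP p q r h1 h2 (hlen ▸ r.isLt) ⟨?_, ?_⟩
      · rw [keyF p, keyF q]
        have h5 := Fin.lt_def.mp (lt_trans h3 h4)
        omega
      · rw [keyF r, keyF q]
        have h5 := Fin.lt_def.mp h4
        omega
    have hB : Avoids231 ⇑σ := by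
      rintro ⟨p, q, r, h1, h2, h3, h4⟩
      refine hNP p q r h1 h2 (hlen ▸ r.isLt) ⟨?_, ?_⟩
      · rw [keyF p, keyF q]
        have h5 := Fin.lt_def.mp h4
        omega
      · rw [keyF r, keyF q]
        have h5 := Fin.lt_def.mp (lt_trans h3 h4)
        omega
    exact ⟨σ, hA, hB, rfl⟩
  · rintro ⟨σ, hA, hB, rfl⟩
    refine ⟨⟨σ, rfl⟩, ?_⟩
    obtain ⟨t, ht, hv⟩ := exists_tree n σ hA hB
    refine ⟨t, ht, funext fun i => ?_⟩
    simp only [permVec, lodayVec, hv i]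
    push_cast
    ring
end

section
/- Let D_n be the set of all permutations of {1,…,n} avoiding both patterns 132 and 231. Then D_n is a Condorcet domain: for every finite list consisting of an odd number of permutations from D_n (repetitions allowed), the strict pairwise majority relation — a beats b iff strictly more than half of the permutations in the list rank a above b — is acyclic (equivalently, a strict linear order on {1,…,n}). -/
/-- The strict pairwise majority relation of a list of linear orders (permutations):
`a` beats `b` iff strictly more than half of the list ranks `a` above `b`,
where a permutation `σ` ranks `a` above `b` iff `σ⁻¹ a < σ⁻¹ b`. -/
def majBeats {n : ℕ} (L : List (Equiv.Perm (Fin n))) (a b : Fin n) : Prop :=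
  L.length < 2 * L.countP (fun σ => decide (σ⁻¹ a < σ⁻¹ b))

/-- Pointwise "never in the middle" property for the largest of three alternatives:
if `σ` avoids both 132 and 231 and `u, v < t`, then `t` is not ranked strictly
between `u` and `v`. -/
lemma never_middle {n : ℕ} {σ : Equiv.Perm (Fin n)} (h132 : Avoids132 ⇑σ)
    (h231 : Avoids231 ⇑σ) {u v t : Fin n} (hu : u < t) (hv : v < t)
    (h1 : σ⁻¹ u < σ⁻¹ t) (h2 : σ⁻¹ t < σ⁻¹ v) : False := by
  have e1 : σ (σ⁻¹ u) = u := σ.apply_symm_apply u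
  have e2 : σ (σ⁻¹ t) = t := σ.apply_symm_apply t
  have e3 : σ (σ⁻¹ v) = v := σ.apply_symm_apply v
  rcases lt_trichotomy u v with h | h | h
  · exact h132 ⟨σ⁻¹ u, σ⁻¹ t, σ⁻¹ v, h1, h2, by rw [e1, e3]; exact h, by rw [e2, e3]; exact hv⟩
  · subst h
    exact absurd (h1.trans h2) (lt_irrefl _)
  · exact h231 ⟨σ⁻¹ u, σ⁻¹ t, σ⁻¹ v, h1, h2, by rw [e1, e3]; exact h, by rw [e1, e2]; exact hu⟩

lemma majBeats_irrefl {n : ℕ} (L : List (Equiv.Perm (Fin n))) (a : Fin n) :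
    ¬ majBeats L a a := by
  unfold majBeats
  have : L.countP (fun σ => decide (σ⁻¹ a < σ⁻¹ a)) = 0 := by
    apply List.countP_eq_zero.mpr
    intro σ _
    simp
  rw [this]
  omega

lemma count_sum {n : ℕ} (L : List (Equiv.Perm (Fin n))) {a b : Fin n} (hab : a ≠ b) :
    L.countP (fun σ => decide (σ⁻¹ a < σ⁻¹ b)) +
      L.countP (fun σ => decide (σ⁻¹ b < σ⁻¹ a)) = L.length := by
  have h := L.length_eq_countP_add_countP (fun σ => decide (σ⁻¹ a < σ⁻¹ b))
  have h2 : L.countP (fun σ => decide ¬(decide (σ⁻¹ a < σ⁻¹ b) = true))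
      = L.countP (fun σ => decide (σ⁻¹ b < σ⁻¹ a)) := by
    apply List.countP_congr
    intro σ _
    simp only [decide_eq_true_eq, decide_not, Bool.not_eq_true', decide_eq_false_iff_not]
    constructor
    · intro hh
      rcases lt_trichotomy (σ⁻¹ a) (σ⁻¹ b) with h' | h' | h'
      · exact absurd h' (by simpa using hh)
      · exact absurd (σ.symm.injective h') hab
      · exact h'
    · intro hh
      simp [not_lt, le_of_lt hh]
      exact le_of_lt hh
  omega

lemma majBeats_total {n : ℕ} (L : List (Equiv.Perm (Fin n))) (hodd : Odd L.length)
    {a b : Fin n} (hab : a ≠ b) : majBeats L a b ∨ majBeats L b a := by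
  have h := count_sum L hab
  obtain ⟨k, hk⟩ := hodd
  unfold majBeats
  omega

lemma majBeats_asymm {n : ℕ} (L : List (Equiv.Perm (Fin n)))
    {a b : Fin n} (h1 : majBeats L a b) (h2 : majBeats L b a) : False := by
  by_cases hab : a = b
  · subst hab; exact majBeats_irrefl L a h1
  have h := count_sum L hab
  unfold majBeats at h1 h2
  omega

lemma no_three_cycle_max {n : ℕ} (L : List (Equiv.Perm (Fin n)))
    (hL : ∀ σ ∈ L, Avoids132 ⇑σ ∧ Avoids231 ⇑σ) {a b c : Fin n}
    (hb : b < a) (hc : c < a)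
    (h1 : majBeats L a b) (h2 : majBeats L b c) (h3 : majBeats L c a) : False := by
  -- voters who rank a above b cannot rank c above a (a would be middle)
  have key : L.countP (fun σ => decide (σ⁻¹ a < σ⁻¹ b)) ≤
      L.countP (fun σ => decide ¬(decide (σ⁻¹ c < σ⁻¹ a) = true)) := by
    apply List.countP_mono_left
    intro σ hσ hp
    simp only [decide_eq_true_eq, decide_not, Bool.not_eq_true',
      decide_eq_false_iff_not] at hp ⊢
    intro hca
    exact never_middle (hL σ hσ).1 (hL σ hσ).2 hc hb hca hp
  have hsum := L.length_eq_countP_add_countP (fun σ => decide (σ⁻¹ c < σ⁻¹ a))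
  unfold majBeats at h1 h3
  omega

lemma no_three_cycle {n : ℕ} (L : List (Equiv.Perm (Fin n)))
    (hL : ∀ σ ∈ L, Avoids132 ⇑σ ∧ Avoids231 ⇑σ) {a b c : Fin n}
    (h1 : majBeats L a b) (h2 : majBeats L b c) (h3 : majBeats L c a) : False := by
  have hab : a ≠ b := by rintro rfl; exact majBeats_irrefl L a h1
  have hbc : b ≠ c := by rintro rfl; exact majBeats_irrefl L b h2
  have hca : c ≠ a := by rintro rfl; exact majBeats_irrefl L c h3
  rcases lt_trichotomy a b with h | h | h
  · rcases lt_trichotomy b c with h' | h' | h'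
    · -- c is max: cycle c → a → b → c
      exact no_three_cycle_max L hL (lt_trans h h') h' h3 h1 h2
    · exact hbc h'
    · rcases lt_trichotomy a c with h'' | h'' | h''
      · -- b is max: cycle b → c → a → b
        exact no_three_cycle_max L hL h' h h2 h3 h1
      · exact hca h''.symm
      · -- b is max
        exact no_three_cycle_max L hL h' h h2 h3 h1
  · exact hab h
  · rcases lt_trichotomy a c with h' | h' | h'
    · -- c is max
      exact no_three_cycle_max L hL h' (lt_trans h h') h3 h1 h2
    · exact hca h'.symm
    · -- a is max
      exact no_three_cycle_max L hL h h' h1 h2 h3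

lemma majBeats_trans {n : ℕ} (L : List (Equiv.Perm (Fin n)))
    (hL : ∀ σ ∈ L, Avoids132 ⇑σ ∧ Avoids231 ⇑σ) (hodd : Odd L.length) :
    Transitive (majBeats L) := by
  intro a b c h1 h2
  by_cases hac : a = c
  · subst hac; exact absurd h2 (fun h => majBeats_asymm L h1 h)
  rcases majBeats_total L hodd hac with h | h
  · exact h
  · exact absurd h (fun h => no_three_cycle L hL h1 h2 h)

/-- The set of permutations of `{1, …, n}` avoiding 132 and 231 is a
Condorcet domain: for every finite list of an odd number of such permutations
(repetitions allowed), the strict pairwise majority relation is acyclic. -/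
theorem avoiding_perms_condorcet (n : ℕ) (L : List (Equiv.Perm (Fin n)))
    (hL : ∀ σ ∈ L, Avoids132 ⇑σ ∧ Avoids231 ⇑σ) (hodd : Odd L.length) :
    ∀ a : Fin n, ¬ Relation.TransGen (majBeats L) a a := by
  intro a h
  haveI : IsTrans (Fin n) (majBeats L) := ⟨majBeats_trans L hL hodd⟩
  rw [Relation.transGen_eq_self] at h
  exact majBeats_irrefl L a h
end

section
/- Let n ≥ 3 and let D_n be the set of all permutations of {1,…,n} avoiding both patterns 132 and 231. Then D_n is a maximal Condorcet domain: for every permutation τ of {1,…,n} with τ ∉ D_n, the set D_n ∪ {τ} is not a Condorcet domain, i.e., there exists a finite list of an odd number of permutations from D_n ∪ {τ} whose strict pairwise majority relation contains a cycle. -/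
section Aux

variable {n : ℕ}

/-- key: negative (descending block) on `P`, positive (ascending block) off `P`. -/
def myKey (P : Fin n → Prop) [DecidablePred P] (v : Fin n) : ℤ :=
  if P v then -((v : ℤ) + 1) else (v : ℤ) + 1

lemma myKey_inj (P : Fin n → Prop) [DecidablePred P] : Function.Injective (myKey P) := by
  intro u v h
  have hu : (0 : ℤ) ≤ (u : ℤ) := Int.ofNat_nonneg _
  have hv : (0 : ℤ) ≤ (v : ℤ) := Int.ofNat_nonneg _
  unfold myKey at h
  have : (u : ℤ) = (v : ℤ) := by split_ifs at h <;> omega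
  exact Fin.val_injective (by exact_mod_cast this)

lemma sortKey_strictMono (P : Fin n → Prop) [DecidablePred P] :
    StrictMono (myKey P ∘ Tuple.sort (myKey P)) :=
  (Tuple.monotone_sort _).strictMono_of_injective
    ((myKey_inj P).comp (Equiv.injective _))

lemma sort_rank (P : Fin n → Prop) [DecidablePred P] (u v : Fin n) :
    (Tuple.sort (myKey P))⁻¹ u < (Tuple.sort (myKey P))⁻¹ v ↔ myKey P u < myKey P v := by
  rw [← (sortKey_strictMono P).lt_iff_lt]
  simp [Function.comp, Equiv.Perm.coe_inv, Equiv.apply_symm_apply]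

lemma sort_avoids (P : Fin n → Prop) [DecidablePred P] :
    Avoids132 ⇑(Tuple.sort (myKey P)) ∧ Avoids231 ⇑(Tuple.sort (myKey P)) := by
  set σ := Tuple.sort (myKey P) with hσ
  have hm := sortKey_strictMono P
  have key : ∀ p q r : Fin n, p < q → q < r → σ p < σ q → σ r < σ q → False := by
    intro p q r hpq hqr h1 h2
    have k1 : myKey P (σ p) < myKey P (σ q) := hm hpq
    have k2 : myKey P (σ q) < myKey P (σ r) := hm hqr
    have h1' : ((σ p : Fin n) : ℤ) < ((σ q : Fin n) : ℤ) := by exact_mod_cast h1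
    have h2' : ((σ r : Fin n) : ℤ) < ((σ q : Fin n) : ℤ) := by exact_mod_cast h2
    have n1 : (0 : ℤ) ≤ ((σ p : Fin n) : ℤ) := Int.ofNat_nonneg _
    have n2 : (0 : ℤ) ≤ ((σ q : Fin n) : ℤ) := Int.ofNat_nonneg _
    have n3 : (0 : ℤ) ≤ ((σ r : Fin n) : ℤ) := Int.ofNat_nonneg _
    unfold myKey at k1 k2
    split_ifs at k1 k2 <;> omega
  constructor
  · rintro ⟨p, q, r, h1, h2, h3, h4⟩
    exact key p q r h1 h2 (h3.trans h4) h4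
  · rintro ⟨p, q, r, h1, h2, h3, h4⟩
    exact key p q r h1 h2 h4 (h3.trans h4)

lemma maj3 (t s1 s2 : Equiv.Perm (Fin n)) (a b : Fin n)
    (h : 2 ≤ (if t⁻¹ a < t⁻¹ b then 1 else 0) + (if s1⁻¹ a < s1⁻¹ b then 1 else 0)
        + (if s2⁻¹ a < s2⁻¹ b then 1 else 0)) :
    majBeats [t, s1, s2] a b := by
  unfold majBeats
  simp only [List.countP_cons, List.countP_nil, List.length_cons, List.length_nil,
    decide_eq_true_eq]
  split_ifs at h ⊢ <;> omega

end Aux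

/-- For `n ≥ 3`, the set of permutations of `{1, …, n}` avoiding 132 and
231 is a maximal Condorcet domain: for any permutation `τ` outside the set, there is a list
of an odd number of permutations from the enlarged set whose strict pairwise majority
relation has a cycle. -/
theorem avoiding_perms_maximal_condorcet (n : ℕ) (hn : 3 ≤ n) (τ : Equiv.Perm (Fin n))
    (hτ : ¬ (Avoids132 ⇑τ ∧ Avoids231 ⇑τ)) :
    ∃ L : List (Equiv.Perm (Fin n)),
      (∀ σ ∈ L, (Avoids132 ⇑σ ∧ Avoids231 ⇑σ) ∨ σ = τ) ∧ Odd L.length ∧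
      ∃ a : Fin n, Relation.TransGen (majBeats L) a a := by
  have hex : ∃ p q r : Fin n, p < q ∧ q < r ∧ τ p < τ q ∧ τ r < τ q := by
    rcases not_and_or.mp hτ with h | h
    · simp only [Avoids132, not_not] at h
      obtain ⟨p, q, r, h1, h2, h3, h4⟩ := h
      exact ⟨p, q, r, h1, h2, h3.trans h4, h4⟩
    · simp only [Avoids231, not_not] at h
      obtain ⟨p, q, r, h1, h2, h3, h4⟩ := h
      exact ⟨p, q, r, h1, h2, h4, h3.trans h4⟩
  obtain ⟨p, q, r, hpq, hqr, hab, hcb⟩ := hex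
  set a := τ p with ha
  set b := τ q with hb
  set c := τ r with hc
  have hta : τ⁻¹ a = p := Equiv.symm_apply_apply τ p
  have htb : τ⁻¹ b = q := Equiv.symm_apply_apply τ q
  have htc : τ⁻¹ c = r := Equiv.symm_apply_apply τ r
  have hab' : ((a : Fin n) : ℤ) < ((b : Fin n) : ℤ) := by exact_mod_cast hab
  have hcb' : ((c : Fin n) : ℤ) < ((b : Fin n) : ℤ) := by exact_mod_cast hcb
  have na : (0 : ℤ) ≤ ((a : Fin n) : ℤ) := Int.ofNat_nonneg _
  have nc : (0 : ℤ) ≤ ((c : Fin n) : ℤ) := Int.ofNat_nonneg _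
  by_cases hac : (a : Fin n) < c
  case pos =>
    have hac' : ((a : Fin n) : ℤ) < ((c : Fin n) : ℤ) := by exact_mod_cast hac
    set s1 := Tuple.sort (myKey (fun v : Fin n => v ≠ b)) with hs1
    set s2 := Tuple.sort (myKey (fun _ : Fin n => True)) with hs2
    refine ⟨[τ, s1, s2], ?_, ⟨1, rfl⟩, a, ?_⟩
    · intro σ hσ
      simp only [List.mem_cons, List.not_mem_nil, or_false] at hσ
      rcases hσ with h | h | h
      · exact Or.inr h
      · exact Or.inl (h ▸ sort_avoids _)
      · exact Or.inl (h ▸ sort_avoids _)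
    · -- rankings of s1 : c ≻ a ≻ b ;  s2 : b ≻ c ≻ a
      have r1ab : s1⁻¹ a < s1⁻¹ b := by
        rw [hs1, sort_rank]
        simp only [myKey]
        rw [if_pos hab.ne, if_neg (not_not.mpr rfl)]
        omega
      have r1ca : s1⁻¹ c < s1⁻¹ a := by
        rw [hs1, sort_rank]
        simp only [myKey]
        rw [if_pos hcb.ne, if_pos hab.ne]
        omega
      have r2bc : s2⁻¹ b < s2⁻¹ c := by
        rw [hs2, sort_rank]
        simp only [myKey, if_true]
        omega
      have r2ca : s2⁻¹ c < s2⁻¹ a := by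
        rw [hs2, sort_rank]
        simp only [myKey, if_true]
        omega
      have m1 : majBeats [τ, s1, s2] a b := by
        apply maj3
        rw [hta, htb, if_pos hpq, if_pos r1ab]
        split_ifs <;> omega
      have m2 : majBeats [τ, s1, s2] b c := by
        apply maj3
        rw [htb, htc, if_pos hqr, if_pos r2bc]
        split_ifs <;> omega
      have m3 : majBeats [τ, s1, s2] c a := by
        apply maj3
        rw [if_pos r1ca, if_pos r2ca]
        split_ifs <;> omega
      exact Relation.TransGen.head m1 (Relation.TransGen.head m2 (Relation.TransGen.single m3))
  case neg =>
    have hca : (c : Fin n) < a := by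
      rcases lt_trichotomy (c : Fin n) a with h | h | h
      · exact h
      · exfalso
        have hpr : p = r := τ.injective (by rw [← ha, ← hc, h])
        exact absurd (hpq.trans hqr) (by simp [hpr])
      · exact absurd h hac
    have hca' : ((c : Fin n) : ℤ) < ((a : Fin n) : ℤ) := by exact_mod_cast hca
    set s1 := Tuple.sort (myKey (fun _ : Fin n => False)) with hs1
    set s2 := Tuple.sort (myKey (fun v : Fin n => v = b)) with hs2
    refine ⟨[τ, s1, s2], ?_, ⟨1, rfl⟩, a, ?_⟩
    · intro σ hσ
      simp only [List.mem_cons, List.not_mem_nil, or_false] at hσ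
      rcases hσ with h | h | h
      · exact Or.inr h
      · exact Or.inl (h ▸ sort_avoids _)
      · exact Or.inl (h ▸ sort_avoids _)
    · -- rankings of s1 : c ≻ a ≻ b ;  s2 : b ≻ c ≻ a
      have r1ab : s1⁻¹ a < s1⁻¹ b := by
        rw [hs1, sort_rank]
        simp only [myKey, if_false]
        omega
      have r1ca : s1⁻¹ c < s1⁻¹ a := by
        rw [hs1, sort_rank]
        simp only [myKey, if_false]
        omega
      have r2bc : s2⁻¹ b < s2⁻¹ c := by
        rw [hs2, sort_rank]
        simp only [myKey]
        rw [if_pos trivial, if_neg hcb.ne]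
        omega
      have r2ca : s2⁻¹ c < s2⁻¹ a := by
        rw [hs2, sort_rank]
        simp only [myKey]
        rw [if_neg hcb.ne, if_neg hab.ne]
        omega
      have m1 : majBeats [τ, s1, s2] a b := by
        apply maj3
        rw [hta, htb, if_pos hpq, if_pos r1ab]
        split_ifs <;> omega
      have m2 : majBeats [τ, s1, s2] b c := by
        apply maj3
        rw [htb, htc, if_pos hqr, if_pos r2bc]
        split_ifs <;> omega
      have m3 : majBeats [τ, s1, s2] c a := by
        apply maj3
        rw [if_pos r1ca, if_pos r2ca]
        split_ifs <;> omega
      exact Relation.TransGen.head m1 (Relation.TransGen.head m2 (Relation.TransGen.single m3))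
end

section
/- Let n ≥ 2. A permutation σ of {1,…,n} avoids both patterns 132 and 231 if and only if the value n appears in the first or last position of σ (i.e., σ(1) = n or σ(n) = n) and the permutation of {1,…,n−1} obtained from σ by deleting the value n avoids both patterns 132 and 231. -/
lemma filter_eq_eraseIdx (n : ℕ) : ∀ (l : List ℕ) (k : ℕ), k < l.length →
    (∀ i (hi : i < l.length), l[i] = n ↔ i = k) →
    l.filter (fun x => decide (x ≠ n)) = l.eraseIdx k := by
  intro l
  induction l with
  | nil => intro k hk; simp at hk
  | cons a t ih =>
    intro k hk h
    cases k with
    | zero =>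
      have ha : a = n := by exact (h 0 (by simp)).mpr rfl
      subst ha
      simp only [List.eraseIdx_zero, List.tail_cons, List.filter_cons]
      rw [if_neg (by simp)]
      rw [List.filter_eq_self]
      intro x hx
      obtain ⟨i, hi, rfl⟩ := List.getElem_of_mem hx
      have := h (i + 1) (by simpa using Nat.succ_lt_succ hi)
      simp only [List.getElem_cons_succ] at this
      simp [this]
    | succ j =>
      have ha : a ≠ n := by
        intro hae
        have := (h 0 (by simp)).mp (by simpa using hae)
        simp at this
      rw [List.filter_cons, if_pos (by simpa using ha), List.eraseIdx_cons_succ]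
      congr 1
      refine ih j (by simpa using Nat.lt_of_succ_lt_succ hk) ?_
      intro i hi
      have := h (i + 1) (by simpa using Nat.succ_lt_succ hi)
      simpa using this


set_option maxHeartbeats 1000000 in
/-- For `n ≥ 2`, a permutation `σ` of `{1, …, n}` avoids 132 and 231 iff
the value `n` is in the first or last position of `σ` and the permutation of `{1, …, n-1}`
obtained from `σ` by deleting the value `n` (the sequence of values `σ(1), …, σ(n)` in
`{1, …, n}` with the entry equal to `n` removed) avoids 132 and 231.
Here a permutation of `Fin n` encodes a permutation of `{1, …, n}` with value `σ(i) + 1`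
at position `i`, so the value `n` corresponds to `n - 1 : Fin n`. -/
theorem avoids_iff_delete_max (n : ℕ) (hn : 2 ≤ n) (σ : Equiv.Perm (Fin n)) :
    (Avoids132 ⇑σ ∧ Avoids231 ⇑σ) ↔
      (((σ ⟨0, by omega⟩ : ℕ) = n - 1 ∨ (σ ⟨n - 1, by omega⟩ : ℕ) = n - 1) ∧
        Avoids132 (fun i : Fin (n - 1) =>
          ((List.ofFn (fun j : Fin n => (σ j : ℕ) + 1)).filter
            (fun x => decide (x ≠ n))).getD i 0) ∧
        Avoids231 (fun i : Fin (n - 1) =>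
          ((List.ofFn (fun j : Fin n => (σ j : ℕ) + 1)).filter
            (fun x => decide (x ≠ n))).getD i 0)) := by
  obtain ⟨m, rfl⟩ : ∃ m, n = m + 2 := ⟨n - 2, by omega⟩
  set k : Fin (m + 2) := σ.symm (Fin.last (m + 1)) with hkdef
  have hσk : σ k = Fin.last (m + 1) := σ.apply_symm_apply _
  have hmax : ∀ j, σ j ≤ Fin.last (m + 1) := fun j => Fin.le_last _
  -- the filtered list equals the list with index k erased
  set L : List ℕ := List.ofFn (fun j : Fin (m + 2) => (σ j : ℕ) + 1) with hL
  have hLlen : L.length = m + 2 := by simp [hL]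
  have hLget : ∀ i (hi : i < L.length), L[i] = (σ ⟨i, by omega⟩ : ℕ) + 1 := by
    intro i hi
    simp only [hL, List.getElem_ofFn]
  have hfe : L.filter (fun x => decide (x ≠ (m + 2))) = L.eraseIdx k := by
    refine filter_eq_eraseIdx (m + 2) L k (by omega) ?_
    intro i hi
    rw [hLget i hi]
    constructor
    · intro hv
      have : σ ⟨i, by omega⟩ = Fin.last (m + 1) := by
        apply Fin.ext; simpa [Fin.last] using hv
      have : (⟨i, by omega⟩ : Fin (m + 2)) = k := by
        rw [hkdef, Equiv.eq_symm_apply]; exact this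
      simpa [Fin.ext_iff] using this
    · intro hv
      have hik : (⟨i, by omega⟩ : Fin (m + 2)) = k := by apply Fin.ext; simpa using hv
      rw [hik, hσk]; simp
  have hflen : (L.filter (fun x => decide (x ≠ (m + 2)))).length = m + 1 := by
    rw [hfe, List.length_eraseIdx, if_pos (by omega), hLlen]
    omega
  -- the deleted sequence as a function
  have hfun : (fun i : Fin (m + 2 - 1) =>
      ((List.ofFn (fun j : Fin (m + 2) => (σ j : ℕ) + 1)).filter
        (fun x => decide (x ≠ (m + 2)))).getD i 0) =
      (fun i : Fin (m + 1) => (σ (k.succAbove i) : ℕ) + 1) := by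
    funext i
    show (L.filter (fun x => decide (x ≠ (m + 2)))).getD i 0 = _
    rw [List.getD_eq_getElem _ _ (by rw [hflen]; exact i.isLt)]
    simp only [hfe]
    rw [List.getElem_eraseIdx]
    rcases lt_or_ge (i : ℕ) (k : ℕ) with hik | hik
    · rw [dif_pos hik, hLget _ (by omega),
        Fin.succAbove_of_castSucc_lt _ _ (by simpa [Fin.lt_def] using hik)]
      rfl
    · rw [dif_neg (by omega), hLget _ (by omega),
        Fin.succAbove_of_le_castSucc _ _ (by simpa [Fin.le_def] using hik)]
      rfl
  rw [hfun]
  -- positions condition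
  have hpos : ((σ ⟨0, by omega⟩ : ℕ) = m + 2 - 1 ∨ (σ ⟨m + 2 - 1, by omega⟩ : ℕ) = m + 2 - 1)
      ↔ (k = ⟨0, by omega⟩ ∨ k = Fin.last (m + 1)) := by
    have hml : (⟨m + 2 - 1, by omega⟩ : Fin (m + 2)) = Fin.last (m + 1) :=
      Fin.ext (by simp)
    constructor
    · rintro (h | h)
      · left
        rw [hkdef, Equiv.symm_apply_eq]
        exact Fin.ext (by simpa using h.symm)
      · right
        rw [hkdef, Equiv.symm_apply_eq]
        rw [hml] at h
        exact Fin.ext (by simpa using h.symm)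
    · rintro (h | h)
      · left; rw [← h, hσk]; rfl
      · right
        rw [hml, ← h, hσk]; rfl
  rw [hpos]
  constructor
  · rintro ⟨h132, h231⟩
    refine ⟨?_, ?_, ?_⟩
    · by_contra hcon
      push_neg at hcon
      obtain ⟨h0, hl⟩ := hcon
      have hk0 : (⟨0, by omega⟩ : Fin (m + 2)) < k := by
        rcases Nat.eq_zero_or_pos (k : ℕ) with h | h
        · exact absurd (Fin.ext h) h0
        · exact Fin.lt_def.mpr h
      have hkl : k < Fin.last (m + 1) := lt_of_le_of_ne (Fin.le_last _) hl
      have hne : σ ⟨0, by omega⟩ ≠ σ (Fin.last (m + 1)) := by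
        intro h; exact absurd (σ.injective h) (Fin.ne_of_lt (lt_trans hk0 hkl))
      have hq1 : σ ⟨0, by omega⟩ < σ k := by
        refine lt_of_le_of_ne (by rw [hσk]; exact hmax _) ?_
        intro h; exact absurd (σ.injective h) (Fin.ne_of_lt hk0)
      have hq2 : σ (Fin.last (m + 1)) < σ k := by
        refine lt_of_le_of_ne (by rw [hσk]; exact hmax _) ?_
        intro h; exact absurd (σ.injective h) (Fin.ne_of_gt hkl)
      rcases lt_or_gt_of_ne hne with hlt | hgt
      · exact h132 ⟨⟨0, by omega⟩, k, Fin.last (m + 1), hk0, hkl, hlt, hq2⟩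
      · exact h231 ⟨⟨0, by omega⟩, k, Fin.last (m + 1), hk0, hkl, hgt, hq1⟩
    · rintro ⟨p, q, r, hpq, hqr, h1, h2⟩
      have h1' : (σ (k.succAbove p) : ℕ) + 1 < (σ (k.succAbove r) : ℕ) + 1 := h1
      have h2' : (σ (k.succAbove r) : ℕ) + 1 < (σ (k.succAbove q) : ℕ) + 1 := h2
      refine h132 ⟨k.succAbove p, k.succAbove q, k.succAbove r,
        Fin.succAbove_lt_succAbove_iff.mpr hpq, Fin.succAbove_lt_succAbove_iff.mpr hqr,
        ?_, ?_⟩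
      · exact Fin.lt_def.mpr (by omega)
      · exact Fin.lt_def.mpr (by omega)
    · rintro ⟨p, q, r, hpq, hqr, h1, h2⟩
      have h1' : (σ (k.succAbove r) : ℕ) + 1 < (σ (k.succAbove p) : ℕ) + 1 := h1
      have h2' : (σ (k.succAbove p) : ℕ) + 1 < (σ (k.succAbove q) : ℕ) + 1 := h2
      refine h231 ⟨k.succAbove p, k.succAbove q, k.succAbove r,
        Fin.succAbove_lt_succAbove_iff.mpr hpq, Fin.succAbove_lt_succAbove_iff.mpr hqr,
        ?_, ?_⟩
      · exact Fin.lt_def.mpr (by omega)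
      · exact Fin.lt_def.mpr (by omega)
  · rintro ⟨hkend, h132g, h231g⟩
    have hqnek : ∀ p q r : Fin (m + 2), p < q → q < r → q ≠ k := by
      intro p q r hpq hqr hqk
      rcases hkend with h | h
      · rw [← hqk] at h
        exact absurd hpq (by simp [h, Fin.lt_def])
      · rw [← hqk] at h
        exact absurd hqr (by rw [h]; exact not_lt.mpr (Fin.le_last r))
    constructor
    · rintro ⟨p, q, r, hpq, hqr, h1, h2⟩
      have hp : p ≠ k := by
        intro h; rw [h, hσk] at h1
        exact absurd h1 (not_lt.mpr (hmax r))
      have hr : r ≠ k := by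
        intro h; rw [h, hσk] at h2
        exact absurd h2 (not_lt.mpr (hmax q))
      have hq : q ≠ k := hqnek p q r hpq hqr
      obtain ⟨p', hp'⟩ := Fin.exists_succAbove_eq hp
      obtain ⟨q', hq'⟩ := Fin.exists_succAbove_eq hq
      obtain ⟨r', hr'⟩ := Fin.exists_succAbove_eq hr
      refine h132g ⟨p', q', r', ?_, ?_, ?_, ?_⟩
      · rw [← Fin.succAbove_lt_succAbove_iff (p := k), hp', hq']; exact hpq
      · rw [← Fin.succAbove_lt_succAbove_iff (p := k), hq', hr']; exact hqr
      · show (σ (k.succAbove p') : ℕ) + 1 < (σ (k.succAbove r') : ℕ) + 1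
        rw [hp', hr']; have := Fin.lt_def.mp h1; omega
      · show (σ (k.succAbove r') : ℕ) + 1 < (σ (k.succAbove q') : ℕ) + 1
        rw [hq', hr']; have := Fin.lt_def.mp h2; omega
    · rintro ⟨p, q, r, hpq, hqr, h1, h2⟩
      have hr : r ≠ k := by
        intro h; rw [h, hσk] at h1
        exact absurd h1 (not_lt.mpr (hmax p))
      have hp : p ≠ k := by
        intro h; rw [h, hσk] at h2
        exact absurd h2 (not_lt.mpr (hmax q))
      have hq : q ≠ k := hqnek p q r hpq hqr
      obtain ⟨p', hp'⟩ := Fin.exists_succAbove_eq hp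
      obtain ⟨q', hq'⟩ := Fin.exists_succAbove_eq hq
      obtain ⟨r', hr'⟩ := Fin.exists_succAbove_eq hr
      refine h231g ⟨p', q', r', ?_, ?_, ?_, ?_⟩
      · rw [← Fin.succAbove_lt_succAbove_iff (p := k), hp', hq']; exact hpq
      · rw [← Fin.succAbove_lt_succAbove_iff (p := k), hq', hr']; exact hqr
      · show (σ (k.succAbove r') : ℕ) + 1 < (σ (k.succAbove p') : ℕ) + 1
        rw [hp', hr']; have := Fin.lt_def.mp h1; omega
      · show (σ (k.succAbove p') : ℕ) + 1 < (σ (k.succAbove q') : ℕ) + 1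
        rw [hp', hq']; have := Fin.lt_def.mp h2; omega
end

section
/- For every n ≥ 1, the number of full binary trees with n+1 leaves in which every internal vertex has at least one child that is a leaf equals 2^{n−1}. -/
/-- Every internal vertex of the tree has at least one child that is a leaf. -/
def BTree.allInternalHaveLeafChild : BTree → Prop
  | .leaf => True
  | .node l r =>
      (l = BTree.leaf ∨ r = BTree.leaf) ∧
        l.allInternalHaveLeafChild ∧ r.allInternalHaveLeafChild

/-- Encode a list of booleans as a caterpillar tree. -/
def catTree : List Bool → BTree
  | [] => .node .leaf .leaf
  | b :: bs => if b then .node .leaf (catTree bs) else .node (catTree bs) .leaf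

lemma catTree_ne_leaf (bs : List Bool) : catTree bs ≠ BTree.leaf := by
  cases bs with
  | nil => simp [catTree]
  | cons b bs => by_cases hb : b <;> simp [catTree, hb]

lemma catTree_leaves (bs : List Bool) : (catTree bs).leaves = bs.length + 2 := by
  induction bs with
  | nil => rfl
  | cons b bs ih => by_cases hb : b <;> simp [catTree, hb, BTree.leaves, ih] <;> omega

lemma catTree_prop (bs : List Bool) : (catTree bs).allInternalHaveLeafChild := by
  induction bs with
  | nil => exact ⟨Or.inl rfl, trivial, trivial⟩
  | cons b bs ih =>
    by_cases hb : b <;> simp [catTree, hb] <;>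
      exact ⟨by simp, by simp [BTree.allInternalHaveLeafChild, ih]⟩

lemma catTree_inj : Function.Injective catTree := by
  intro bs
  induction bs with
  | nil =>
    intro cs h
    cases cs with
    | nil => rfl
    | cons c cs =>
      exfalso
      by_cases hc : c <;> simp [catTree, hc] at h <;>
        exact catTree_ne_leaf cs h.symm
  | cons b bs ih =>
    intro cs h
    cases cs with
    | nil =>
      exfalso
      by_cases hb : b <;> simp [catTree, hb] at h <;>
        exact catTree_ne_leaf bs h
    | cons c cs =>
      by_cases hb : b <;> by_cases hc : c <;>
        simp [catTree, hb, hc] at h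
      · rw [hb, hc, ih h]
      · exact absurd h.2 (catTree_ne_leaf bs)
      · exact absurd h.1 (catTree_ne_leaf bs)
      · have hb' : b = false := by simpa using hb
        have hc' : c = false := by simpa using hc
        rw [hb', hc', ih h]

lemma catTree_surj : ∀ t : BTree, t.allInternalHaveLeafChild → 2 ≤ t.leaves →
    ∃ bs : List Bool, t = catTree bs := by
  intro t
  induction t with
  | leaf => intro _ h; simp [BTree.leaves] at h
  | node l r ihl ihr =>
    intro hp _
    obtain ⟨hlr, hl, hr⟩ := hp
    have hpos : ∀ s : BTree, 1 ≤ s.leaves := by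
      intro s; induction s with
      | leaf => exact le_refl 1
      | node a b iha ihb => simp [BTree.leaves]; omega
    rcases hlr with h1 | h1
    · subst h1
      cases r with
      | leaf => exact ⟨[], rfl⟩
      | node a b =>
        obtain ⟨bs, hbs⟩ := ihr hr (by have := hpos a; have := hpos b; simp [BTree.leaves]; omega)
        exact ⟨true :: bs, by simp [catTree, ← hbs]⟩
    · subst h1
      cases l with
      | leaf => exact ⟨[], rfl⟩
      | node a b =>
        obtain ⟨bs, hbs⟩ := ihl hl (by have := hpos a; have := hpos b; simp [BTree.leaves]; omega)
        exact ⟨false :: bs, by simp [catTree, ← hbs]⟩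

/-- For `n ≥ 1`, the number of full binary trees with `n+1` leaves in
which every internal vertex has at least one child that is a leaf equals `2 ^ (n - 1)`. -/
theorem card_caterpillar_trees (n : ℕ) (hn : 1 ≤ n) :
    Set.ncard {t : BTree | t.leaves = n + 1 ∧ t.allInternalHaveLeafChild} = 2 ^ (n - 1) := by
  have hset : {t : BTree | t.leaves = n + 1 ∧ t.allInternalHaveLeafChild}
      = catTree '' {bs : List Bool | bs.length = n - 1} := by
    ext t
    constructor
    · rintro ⟨h1, h2⟩
      obtain ⟨bs, rfl⟩ := catTree_surj t h2 (by omega)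
      refine ⟨bs, ?_, rfl⟩
      have := catTree_leaves bs
      simp only [Set.mem_setOf_eq]
      omega
    · rintro ⟨bs, hbs, rfl⟩
      simp only [Set.mem_setOf_eq] at hbs ⊢
      refine ⟨?_, catTree_prop bs⟩
      rw [catTree_leaves, hbs]; omega
  rw [hset, Set.ncard_image_of_injective _ catTree_inj]
  rw [← Nat.card_coe_set_eq]
  have : Nat.card {bs : List Bool | bs.length = n - 1}
      = Nat.card (List.Vector Bool (n - 1)) := Nat.card_congr (Equiv.refl _)
  rw [this, Nat.card_eq_fintype_card, card_vector, Fintype.card_bool]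
end
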